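/- arXiv:0910.0535 — 4 statements merged into one kernel-verified Lean document; each statement's English description precedes it below -/
import Mathlib

section
/- For any cardinals λ₁, λ₂ ≥ 1 and any semigroup S with zero, the Brandt λ₂⁰-extension of the Brandt λ₁⁰-extension of S is isomorphic to the Brandt λ⁰-extension of S, where λ = λ₁·λ₂. An explicit isomorphism is given by (α₂,(α₁,s,β₁),β₂) ↦ ((α₂,α₁), s, (β₁,β₂)) and 0 ↦ 0, indexing by I_λ = I_{λ₁} × I_{λ₂}. -/
attribute [local instance] Classical.propDecidable

/-- The Brandt `λ⁰`-extension of a semigroup `S` with zero, with index set `I`: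
its elements are `0` (encoded `none`) and triples `(α, s, β)` with `s ≠ 0`. -/
def Brandt (I S : Type*) [Zero S] : Type _ := Option (I × {s : S // s ≠ 0} × I)

instance brandtZero {I S : Type*} [Zero S] : Zero (Brandt I S) := ⟨none⟩

/-- Multiplication on the Brandt `λ⁰`-extension. -/
noncomputable def brandtMul {I S : Type*} [Zero S] [Mul S] :
    Brandt I S → Brandt I S → Brandt I S
  | some (α, a, β), some (γ, b, δ) =>
      if h : β = γ ∧ a.1 * b.1 ≠ 0 then some (α, ⟨a.1 * b.1, h.2⟩, δ) else none
  | _, _ => none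

noncomputable instance brandtMulInst {I S : Type*} [Zero S] [Mul S] :
    Mul (Brandt I S) := ⟨brandtMul⟩

/-- The semigroup of `I × I`-matrix units. -/
def MatrixUnits (I : Type*) := Option (I × I)

instance muZero {I : Type*} : Zero (MatrixUnits I) := ⟨none⟩

noncomputable instance muMul {I : Type*} : Mul (MatrixUnits I) :=
  ⟨fun x y => match x, y with
    | some (a, b), some (c, d) => if b = c then some (a, d) else none
    | _, _ => none⟩

/-- The subset of `Brandt I S` induced by a subset `T ⊆ S`
(the Brandt extension of `T` inside that of `S`). -/
def brandtSet {I S : Type*} [Zero S] (T : Set S) : Set (Brandt I S) :=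
  {z | z = 0 ∨ ∃ (α β : I) (s : {s : S // s ≠ 0}), s.1 ∈ T ∧ z = some (α, s, β)}

/-- The map `B⁰_{λ₁}(S) → B⁰_{λ₂}(T)` induced by `h : S → T`, an index map `φ`
and families `u`, `v` (`v` playing the role of `a ↦ u(a)⁻¹`):
`(α,s,β) ↦ (φ α, u α · h s · v β, φ β)` when the middle entry is nonzero, else `0`. -/
noncomputable def brandtHomMap {I₁ I₂ S T : Type*} [Zero S] [Zero T] [Mul T]
    (φ : I₁ → I₂) (u v : I₁ → T) (h : S → T) : Brandt I₁ S → Brandt I₂ T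
  | some (a, s, b) =>
      if hh : u a * h s.1 * v b ≠ 0 then
        some (φ a, ⟨u a * h s.1 * v b, hh⟩, φ b) else none
  | none => none

/-- The canonical copy of `S` in `Brandt I S` at index `α` (the set `S_{α,α}`). -/
noncomputable def brandtIncl {I S : Type*} [Zero S] (α : I) : S → Brandt I S :=
  fun s => if h : s = 0 then 0 else some (α, ⟨s, h⟩, α)

/-- The non-zero element `(α, s, β)` of `Brandt I S`. -/
def brandtElt {I S : Type*} [Zero S] (α : I) (s : {s : S // s ≠ 0}) (β : I) :
    Brandt I S := some (α, s, β)


/-! A product `(α₂, x, β₂) · (γ₂, y, δ₂)` in `B⁰_{λ₂}(B⁰_{λ₁}(S))` with `x = (α₁, s, β₁)`,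
`y = (γ₁, t, δ₁)` is nonzero exactly when `β₂ = γ₂` and `x y ≠ 0`, that is when `β₂ = γ₂`,
`β₁ = γ₁` and `s t ≠ 0`; this is the condition `(β₂, β₁) = (γ₂, γ₁)`, `s t ≠ 0` for the product of
`((α₂, α₁), s, (β₂, β₁))` and `((γ₂, γ₁), t, (δ₂, δ₁))` in `B⁰_{λ₂ × λ₁}(S)`. Hence flattening
the nested triples is a multiplicative bijection. -/

namespace Brandt

variable {I I₁ I₂ S : Type*}

section Basic

variable [Zero S]

lemma eq_zero_or_eq_brandtElt (x : Brandt I S) :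
    x = 0 ∨ ∃ α s β, x = brandtElt α s β := by
  rcases x with _ | ⟨α, s, β⟩
  · exact .inl rfl
  · exact .inr ⟨α, s, β, rfl⟩

lemma brandtElt_ne_zero (α β : I) (s : {s : S // s ≠ 0}) : brandtElt α s β ≠ 0 :=
  Option.some_ne_none _

variable [Mul S]

protected lemma mul_zero (x : Brandt I S) : x * 0 = 0 := by
  rcases x with _ | ⟨α, s, β⟩ <;> rfl

lemma brandtElt_mul_brandtElt {α β γ δ : I} {a b : {s : S // s ≠ 0}} (hβγ : β = γ)
    (hab : a.1 * b.1 ≠ 0) :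
    brandtElt α a β * brandtElt γ b δ = brandtElt α ⟨a.1 * b.1, hab⟩ δ :=
  dif_pos ⟨hβγ, hab⟩

lemma brandtElt_mul_brandtElt_eq_zero {α β γ δ : I} {a b : {s : S // s ≠ 0}}
    (h : ¬(β = γ ∧ a.1 * b.1 ≠ 0)) :
    brandtElt α a β * brandtElt γ b δ = 0 :=
  dif_neg h

end Basic

section Flatten

variable [Zero S]

def flatten : Brandt I₂ (Brandt I₁ S) → Brandt (I₂ × I₁) S
  | none => none
  | some (_, ⟨none, hx⟩, _) => absurd rfl hx
  | some (α₂, ⟨some (α₁, s, β₁), _⟩, β₂) => some ((α₂, α₁), s, (β₂, β₁))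

def unflatten : Brandt (I₂ × I₁) S → Brandt I₂ (Brandt I₁ S)
  | none => none
  | some ((α₂, α₁), s, (β₂, β₁)) =>
      some (α₂, ⟨brandtElt α₁ s β₁, brandtElt_ne_zero _ _ _⟩, β₂)

lemma flatten_zero : flatten (0 : Brandt I₂ (Brandt I₁ S)) = 0 := rfl

lemma flatten_brandtElt_of_eq (α₂ β₂ : I₂) {x : Brandt I₁ S} (hx : x ≠ 0)
    {α₁ β₁ : I₁} {s : {s : S // s ≠ 0}} (e : x = brandtElt α₁ s β₁) :
    flatten (brandtElt α₂ ⟨x, hx⟩ β₂) = brandtElt (α₂, α₁) s (β₂, β₁) := by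
  subst e; rfl

lemma unflatten_flatten (x : Brandt I₂ (Brandt I₁ S)) : unflatten (flatten x) = x := by
  rcases x with _ | ⟨α₂, ⟨_ | ⟨α₁, s, β₁⟩, hx⟩, β₂⟩
  · rfl
  · exact absurd rfl hx
  · rfl

lemma flatten_unflatten (x : Brandt (I₂ × I₁) S) : flatten (unflatten x) = x := by
  rcases x with _ | ⟨⟨α₂, α₁⟩, s, ⟨β₂, β₁⟩⟩ <;> rfl

lemma flatten_mul [Mul S] (x y : Brandt I₂ (Brandt I₁ S)) :
    flatten (x * y) = flatten x * flatten y := by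
  obtain rfl | ⟨α₂, ⟨x, hx⟩, β₂, rfl⟩ := eq_zero_or_eq_brandtElt x
  · rfl
  obtain rfl | ⟨γ₂, ⟨y, hy⟩, δ₂, rfl⟩ := eq_zero_or_eq_brandtElt y
  · rw [Brandt.mul_zero, flatten_zero, Brandt.mul_zero]
  obtain ⟨α₁, s, β₁, rfl⟩ := (eq_zero_or_eq_brandtElt x).resolve_left hx
  obtain ⟨γ₁, t, δ₁, rfl⟩ := (eq_zero_or_eq_brandtElt y).resolve_left hy
  rw [flatten_brandtElt_of_eq _ _ hx rfl, flatten_brandtElt_of_eq _ _ hy rfl]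
  by_cases hinner : β₁ = γ₁ ∧ s.1 * t.1 ≠ 0
  · have e := brandtElt_mul_brandtElt (α := α₁) (δ := δ₁) hinner.1 hinner.2
    by_cases hβ₂ : β₂ = γ₂
    · rw [brandtElt_mul_brandtElt hβ₂ (e ▸ brandtElt_ne_zero _ _ _),
        flatten_brandtElt_of_eq _ _ _ e, brandtElt_mul_brandtElt (Prod.ext hβ₂ hinner.1) hinner.2]
    · rw [brandtElt_mul_brandtElt_eq_zero (fun h => hβ₂ h.1),
        brandtElt_mul_brandtElt_eq_zero (fun h => hβ₂ (congrArg Prod.fst h.1)), flatten_zero]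
  · rw [brandtElt_mul_brandtElt_eq_zero (fun h => h.2 (brandtElt_mul_brandtElt_eq_zero hinner)),
      brandtElt_mul_brandtElt_eq_zero (fun h => hinner ⟨congrArg Prod.snd h.1, h.2⟩), flatten_zero]

def flattenEquiv [Mul S] : Brandt I₂ (Brandt I₁ S) ≃* Brandt (I₂ × I₁) S where
  toFun := flatten
  invFun := unflatten
  left_inv := unflatten_flatten
  right_inv := flatten_unflatten
  map_mul' := flatten_mul

end Flatten

end Brandt

/-- `B⁰_{λ₂}(B⁰_{λ₁}(S)) ≅ B⁰_{λ₁·λ₂}(S)` via the explicit map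
`(α₂,(α₁,s,β₁),β₂) ↦ ((α₂,α₁), s, (β₂,β₁))` and `0 ↦ 0`, indexing by `I₂ × I₁`. -/
theorem brandt_iterate {I₁ I₂ S : Type*} [SemigroupWithZero S] :
    ∃ f : Brandt I₂ (Brandt I₁ S) ≃* Brandt (I₂ × I₁) S,
      f 0 = 0 ∧
      ∀ (α₂ β₂ : I₂) (α₁ β₁ : I₁) (s : {s : S // s ≠ 0})
        (h : brandtElt α₁ s β₁ ≠ (0 : Brandt I₁ S)),
        f (brandtElt α₂ ⟨brandtElt α₁ s β₁, h⟩ β₂) = brandtElt (α₂, α₁) s (β₂, β₁) :=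
  ⟨Brandt.flattenEquiv, Brandt.flatten_zero, fun _ _ _ _ _ _ => rfl⟩
end

section
/- For any cardinals λ, ν ≥ 1, the Brandt λ⁰-extension of the semigroup B_ν of I_ν × I_ν-matrix units is isomorphic to the semigroup of I_{λ·ν} × I_{λ·ν}-matrix units. -/
attribute [local instance] Classical.propDecidable

/-!
A nonzero element `(α, (a, b), β)` of the Brandt extension of `B_J` is sent to the matrix unit
`((α, a), (β, b))` over `I × J`. The product of `(α, (a, b), β)` and `(γ, (c, d), δ)` is nonzero
exactly when `β = γ` and `b = c`, i.e. when `(β, b) = (γ, c)`, which is the multiplication rule of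
matrix units over `I × J`.
-/

namespace MatrixUnits

variable {J : Type*}

def mk (a b : J) : MatrixUnits J := some (a, b)

theorem mk_ne_zero (a b : J) : mk a b ≠ 0 :=
  Option.some_ne_none _

theorem mk_mul_mk (a b c d : J) : mk a b * mk c d = if b = c then mk a d else 0 :=
  rfl

theorem mk_mul_mk_ne_zero_iff (a b c d : J) : mk a b * mk c d ≠ 0 ↔ b = c := by
  rw [mk_mul_mk]
  split_ifs with h
  · exact iff_of_true (mk_ne_zero a d) h
  · exact iff_of_false (not_not.mpr rfl) h

def neZeroEquiv : {s : MatrixUnits J // s ≠ 0} ≃ J × J where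
  toFun s := s.1.get (Option.ne_none_iff_isSome.mp s.2)
  invFun p := ⟨mk p.1 p.2, mk_ne_zero p.1 p.2⟩
  left_inv _ := Subtype.ext (Option.some_get _)
  right_inv _ := rfl

end MatrixUnits

namespace Brandt

variable {I S : Type*} [Zero S]

def mk (α : I) (a : {s : S // s ≠ 0}) (β : I) : Brandt I S := some (α, a, β)

theorem mk_mul_mk [Mul S] (α β γ δ : I) (a b : {s : S // s ≠ 0}) :
    mk α a β * mk γ b δ =
      if h : β = γ ∧ a.1 * b.1 ≠ 0 then mk α ⟨a.1 * b.1, h.2⟩ δ else 0 :=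
  rfl

end Brandt

section

open MatrixUnits

variable {I J : Type*}

def brandtMatrixUnitsEquiv : Brandt I (MatrixUnits J) ≃ MatrixUnits (I × J) :=
  Equiv.optionCongr
    { toFun := fun (α, s, β) => ((α, (neZeroEquiv s).1), (β, (neZeroEquiv s).2))
      invFun := fun ((α, a), (β, b)) => (α, neZeroEquiv.symm (a, b), β)
      left_inv := fun (α, s, β) => by simp
      right_inv := fun _ => rfl }

theorem brandtMatrixUnitsEquiv_mk (α β : I) (a b : J) :
    brandtMatrixUnitsEquiv (Brandt.mk α ⟨mk a b, mk_ne_zero a b⟩ β) = mk (α, a) (β, b) :=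
  rfl

theorem brandt_mk_mul_mk_of_matrixUnits (α β γ δ : I) (a b c d : J) :
    Brandt.mk α ⟨mk a b, mk_ne_zero a b⟩ β * Brandt.mk γ ⟨mk c d, mk_ne_zero c d⟩ δ =
      if β = γ ∧ b = c then Brandt.mk α ⟨mk a d, mk_ne_zero a d⟩ δ else 0 := by
  rw [Brandt.mk_mul_mk]
  simp only [mk_mul_mk_ne_zero_iff]
  split_ifs with h
  · obtain ⟨rfl, rfl⟩ := h
    simp [mk_mul_mk]
  · rfl

theorem brandtMatrixUnitsEquiv_mul (x y : Brandt I (MatrixUnits J)) :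
    brandtMatrixUnitsEquiv (x * y) = brandtMatrixUnitsEquiv x * brandtMatrixUnitsEquiv y := by
  rcases x with _ | ⟨α, s, β⟩
  · rfl
  rcases y with _ | ⟨γ, t, δ⟩
  · rfl
  obtain ⟨⟨a, b⟩, rfl⟩ := neZeroEquiv.symm.surjective s
  obtain ⟨⟨c, d⟩, rfl⟩ := neZeroEquiv.symm.surjective t
  change brandtMatrixUnitsEquiv (Brandt.mk α ⟨mk a b, _⟩ β * Brandt.mk γ ⟨mk c d, _⟩ δ) =
    brandtMatrixUnitsEquiv (Brandt.mk α ⟨mk a b, _⟩ β) *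
      brandtMatrixUnitsEquiv (Brandt.mk γ ⟨mk c d, _⟩ δ)
  rw [brandt_mk_mul_mk_of_matrixUnits, brandtMatrixUnitsEquiv_mk, brandtMatrixUnitsEquiv_mk,
    mk_mul_mk, Prod.mk.injEq]
  split_ifs
  · exact brandtMatrixUnitsEquiv_mk α δ a d
  · rfl

end

theorem brandt_of_matrixUnits_general {I J : Type*} :
    Nonempty (Brandt I (MatrixUnits J) ≃* MatrixUnits (I × J)) :=
  ⟨{ brandtMatrixUnitsEquiv with map_mul' := brandtMatrixUnitsEquiv_mul }⟩

/-- The Brandt `λ⁰`-extension of the semigroup of `I_ν × I_ν`-matrix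
units is isomorphic to the semigroup of `I_{λ·ν} × I_{λ·ν}`-matrix units. -/
theorem brandt_of_matrixUnits {I J : Type*} [Nonempty I] [Nonempty J] :
    Nonempty (Brandt I (MatrixUnits J) ≃* MatrixUnits (I × J)) :=
  brandt_of_matrixUnits_general
end

section
/- If a semigroup S with zero is an orthogonal sum of a family of semigroups {S_α}_{α∈A} with zeros, then the Brandt λ⁰-extension B⁰_λ(S) is isomorphic to the orthogonal sum of the family {B⁰_λ(S_α)}_{α∈A}. -/
attribute [local instance] Classical.propDecidable

/-! The construction `T ↦ brandtSet T` carries each defining property of an orthogonal sum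
over to the Brandt extension: it commutes with intersections, sends `{0}` to `{0}`, sends a
cover to a cover, and if `T * U ⊆ V` then `brandtSet T * brandtSet U ⊆ brandtSet V`, since a
nonzero product of triples has as middle entry the product of the middle entries. -/

namespace Brandt

variable {I S : Type*} [Zero S]

theorem zero_mem_brandtSet (T : Set S) : (0 : Brandt I S) ∈ brandtSet T :=
  Or.inl rfl

theorem some_mem_brandtSet {T : Set S} {α β : I} {s : {s : S // s ≠ 0}} (hs : s.1 ∈ T) :
    (some (α, s, β) : Brandt I S) ∈ brandtSet T :=
  Or.inr ⟨α, β, s, hs, rfl⟩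

theorem brandtSet_singleton_zero : brandtSet ({0} : Set S) = {(0 : Brandt I S)} := by
  ext z
  constructor
  · rintro (rfl | ⟨α, β, s, hs, rfl⟩)
    · rfl
    · exact absurd hs s.2
  · rintro rfl
    exact zero_mem_brandtSet _

theorem brandtSet_inter (T U : Set S) :
    brandtSet (T ∩ U) = (brandtSet T ∩ brandtSet U : Set (Brandt I S)) := by
  ext z
  constructor
  · rintro (rfl | ⟨α, β, s, ⟨hsT, hsU⟩, rfl⟩)
    · exact ⟨zero_mem_brandtSet T, zero_mem_brandtSet U⟩
    · exact ⟨some_mem_brandtSet hsT, some_mem_brandtSet hsU⟩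
  · rintro ⟨rfl | ⟨α, β, s, hsT, rfl⟩, hU⟩
    · exact zero_mem_brandtSet _
    · obtain h0 | ⟨γ, δ, t, htU, heq⟩ := hU
      · exact Or.inl h0
      · obtain ⟨-, rfl, -⟩ := Prod.ext_iff.mp (Option.some.inj heq)
        exact some_mem_brandtSet ⟨hsT, htU⟩

theorem exists_mem_brandtSet {A : Type*} {Sf : A → Set S} (hcover : ∀ s : S, ∃ a, s ∈ Sf a)
    (z : Brandt I S) : ∃ a, z ∈ brandtSet (Sf a) := by
  match z with
  | none =>
    obtain ⟨a, -⟩ := hcover 0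
    exact ⟨a, zero_mem_brandtSet _⟩
  | some (α, s, β) =>
    obtain ⟨a, ha⟩ := hcover s.1
    exact ⟨a, some_mem_brandtSet ha⟩

variable [Mul S]

theorem some_mul_some_of_ne_zero {α β δ : I} {s t : {s : S // s ≠ 0}} (h : s.1 * t.1 ≠ 0) :
    @HMul.hMul (Brandt I S) (Brandt I S) _ _ (some (α, s, β)) (some (β, t, δ)) =
      some (α, ⟨s.1 * t.1, h⟩, δ) :=
  dif_pos ⟨rfl, h⟩

theorem some_mul_some_eq_zero {α β γ δ : I} {s t : {s : S // s ≠ 0}}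
    (h : ¬(β = γ ∧ s.1 * t.1 ≠ 0)) :
    @HMul.hMul (Brandt I S) (Brandt I S) _ _ (some (α, s, β)) (some (γ, t, δ)) = 0 :=
  dif_neg h

theorem mul_mem_brandtSet {T U V : Set S} (hmul : ∀ s ∈ T, ∀ t ∈ U, s * t ∈ V)
    {x y : Brandt I S} (hx : x ∈ brandtSet T) (hy : y ∈ brandtSet U) :
    x * y ∈ brandtSet V := by
  obtain rfl | ⟨α, β, s, hs, rfl⟩ := hx
  · exact zero_mem_brandtSet V
  obtain rfl | ⟨γ, δ, t, ht, rfl⟩ := hy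
  · exact zero_mem_brandtSet V
  by_cases h : β = γ ∧ s.1 * t.1 ≠ 0
  · obtain ⟨rfl, hst⟩ := h
    rw [some_mul_some_of_ne_zero hst]
    exact some_mem_brandtSet (hmul _ hs _ ht)
  · rw [some_mul_some_eq_zero h]
    exact zero_mem_brandtSet V

end Brandt

theorem brandt_orthogonal_sum_general {I S A : Type*} [SemigroupWithZero S]
    (Sf : A → Set S)
    (hsub : ∀ a, ∀ x ∈ Sf a, ∀ y ∈ Sf a, x * y ∈ Sf a)
    (hunion : ∀ s : S, ∃ a, s ∈ Sf a)
    (hint : ∀ a b, a ≠ b → Sf a ∩ Sf b = {0})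
    (hprod : ∀ a b, a ≠ b → ∀ x ∈ Sf a, ∀ y ∈ Sf b, x * y = 0) :
    (∀ a, ∀ x ∈ brandtSet (I := I) (Sf a), ∀ y ∈ brandtSet (I := I) (Sf a),
        x * y ∈ brandtSet (I := I) (Sf a)) ∧
    (∀ z : Brandt I S, ∃ a, z ∈ brandtSet (I := I) (Sf a)) ∧
    (∀ a b, a ≠ b →
        brandtSet (I := I) (Sf a) ∩ brandtSet (I := I) (Sf b) = {(0 : Brandt I S)}) ∧
    (∀ a b, a ≠ b → ∀ x ∈ brandtSet (I := I) (Sf a), ∀ y ∈ brandtSet (I := I) (Sf b),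
        x * y = 0) := by
  refine ⟨fun a _ hx _ hy => Brandt.mul_mem_brandtSet (hsub a) hx hy,
    Brandt.exists_mem_brandtSet hunion, fun a b hab => ?_, fun a b hab x hx y hy => ?_⟩
  · rw [← Brandt.brandtSet_inter, hint a b hab, Brandt.brandtSet_singleton_zero]
  · simpa only [Brandt.brandtSet_singleton_zero, Set.mem_singleton_iff] using
      Brandt.mul_mem_brandtSet (V := {0}) (hprod a b hab) hx hy

/-- If `S` is the orthogonal sum of a family of subsemigroups
`{S_a}` with zeros, then `B⁰_λ(S)` is the orthogonal sum of the family
`{B⁰_λ(S_a)}`. -/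
theorem brandt_orthogonal_sum {I S A : Type*} [SemigroupWithZero S]
    (Sf : A → Set S)
    (hzero : ∀ a, (0 : S) ∈ Sf a)
    (hsub : ∀ a, ∀ x ∈ Sf a, ∀ y ∈ Sf a, x * y ∈ Sf a)
    (hunion : ∀ s : S, ∃ a, s ∈ Sf a)
    (hint : ∀ a b, a ≠ b → Sf a ∩ Sf b = {0})
    (hprod : ∀ a b, a ≠ b → ∀ x ∈ Sf a, ∀ y ∈ Sf b, x * y = 0) :
    (∀ a, ∀ x ∈ brandtSet (I := I) (Sf a), ∀ y ∈ brandtSet (I := I) (Sf a),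
        x * y ∈ brandtSet (I := I) (Sf a)) ∧
    (∀ z : Brandt I S, ∃ a, z ∈ brandtSet (I := I) (Sf a)) ∧
    (∀ a b, a ≠ b →
        brandtSet (I := I) (Sf a) ∩ brandtSet (I := I) (Sf b) = {(0 : Brandt I S)}) ∧
    (∀ a b, a ≠ b → ∀ x ∈ brandtSet (I := I) (Sf a), ∀ y ∈ brandtSet (I := I) (Sf b),
        x * y = 0) :=
  brandt_orthogonal_sum_general Sf hsub hunion hint hprod
end

section
/- Let S and T be semilattices with identity and zero, and let (h,u,φ) and (f,v,ψ) be two triples where h, f : S → T are zero-preserving monoid-with-zero homomorphisms, u, v : I_{λ₁} → H(e) are maps into maximal subgroups at idempotents of T, and φ, ψ : I_{λ₁} → I_{λ₂} are injections. If the induced homomorphisms B(h,u,φ) and B(f,v,ψ) from B⁰_{λ₁}(S) to B⁰_{λ₂}(T) are equal, then h = f, u = v, and φ = ψ. -/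
attribute [local instance] Classical.propDecidable

/- In a semilattice every maximal subgroup is trivial, so the twisting families `u`, `w` (and
their inverses) are constantly `h 1`, resp. `f 1`, and drop out of the induced maps. What is left
sends `(α, s, β)` to `(φ α, h s, φ β)`, from which `h` and `φ` are read off directly, using a
nonzero element `(α, 1, α)` for `φ`. -/

theorem IsIdempotentElem.eq_of_mul_eq_self_of_mul_eq {M : Type*} [Semigroup M] {u v e : M}
    (hu : IsIdempotentElem u) (hue : u * e = u) (huv : u * v = e) : u = e :=
  calc u = u * (u * v) := by rw [huv, hue]
    _ = u * v := by rw [← mul_assoc, hu.eq]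
    _ = e := huv

section BrandtElt

variable {I S : Type*} [Zero S]

theorem brandtElt_ne_zero (α : I) (s : {s : S // s ≠ 0}) (β : I) : brandtElt α s β ≠ 0 :=
  Option.some_ne_none _

theorem brandtElt_inj {α α' β β' : I} {s s' : {s : S // s ≠ 0}} :
    brandtElt α s β = brandtElt α' s' β' ↔ α = α' ∧ s = s' ∧ β = β' := by
  change (some (α, s, β) : Option (I × {s : S // s ≠ 0} × I)) = some (α', s', β') ↔ _
  simp only [Option.some.injEq, Prod.mk.injEq]

end BrandtElt

theorem brandtHomMap_congr_mid {I₁ I₂ S T : Type*} [Zero S] [Zero T] [Mul T] {φ : I₁ → I₂}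
    {u v u' v' : I₁ → T} {h h' : S → T}
    (hmid : ∀ a b s, u a * h s * v b = u' a * h' s * v' b) :
    brandtHomMap φ u v h = brandtHomMap φ u' v' h' := by
  funext x
  rcases x with _ | ⟨a, s, b⟩
  · rfl
  · simp only [brandtHomMap]
    rw [hmid]

section BrandtHomMap

variable {I₁ I₂ S T : Type*} [Zero S] [MulZeroOneClass T]

theorem brandtHomMap_eq_brandtHomMap_one_one [MulOneClass S] (φ : I₁ → I₂) {u v : I₁ → T}
    {h : S → T} (hm : ∀ s t : S, h (s * t) = h s * h t) (hu : ∀ a, u a = h 1) (hv : ∀ a, v a = h 1) :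
    brandtHomMap φ u v h = brandtHomMap φ 1 1 h :=
  brandtHomMap_congr_mid fun a b s => by
    rw [hu, hv, ← hm, one_mul, ← hm, mul_one, Pi.one_apply, Pi.one_apply, one_mul, mul_one]

theorem brandtHomMap_one_one_brandtElt (φ : I₁ → I₂) (h : S → T) (a : I₁)
    (s : {s : S // s ≠ 0}) (b : I₁) :
    brandtHomMap φ 1 1 h (brandtElt a s b) =
      if hs : h s ≠ 0 then brandtElt (φ a) ⟨h s, hs⟩ (φ b) else 0 := by
  by_cases hs : h s = 0 <;>
    simp only [brandtHomMap, brandtElt, ne_eq, Pi.one_apply, one_mul, mul_one, mul_zero, hs,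
      not_true_eq_false, not_false_eq_true, ↓reduceDIte] <;>
    rfl

variable {φ ψ : I₁ → I₂} {h f : S → T}

theorem apply_eq_of_brandtHomMap_one_one_eq (heq : brandtHomMap φ 1 1 h = brandtHomMap ψ 1 1 f)
    (a : I₁) (s : {s : S // s ≠ 0}) : h s = f s := by
  have key := congrFun heq (brandtElt a s a)
  rw [brandtHomMap_one_one_brandtElt, brandtHomMap_one_one_brandtElt] at key
  split_ifs at key with hs fs fs
  · exact congrArg Subtype.val (brandtElt_inj.1 key).2.1
  · exact absurd key (brandtElt_ne_zero _ _ _)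
  · exact absurd key.symm (brandtElt_ne_zero _ _ _)
  · rw [not_not.1 hs, not_not.1 fs]

theorem index_eq_of_brandtHomMap_one_one_eq (heq : brandtHomMap φ 1 1 h = brandtHomMap ψ 1 1 f)
    (s : {s : S // s ≠ 0}) (hs : h s ≠ 0) (a : I₁) : φ a = ψ a := by
  have key := congrFun heq (brandtElt a s a)
  rw [brandtHomMap_one_one_brandtElt, brandtHomMap_one_one_brandtElt, dif_pos hs,
    dif_pos (apply_eq_of_brandtHomMap_one_one_eq heq a s ▸ hs)] at key
  exact (brandtElt_inj.1 key).1

end BrandtHomMap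

theorem brandt_hom_determines_triple_general {I₁ I₂ S T : Type*}
    [CommMonoidWithZero S] [CommMonoidWithZero T] [Nonempty I₁]
    (hidemT : ∀ x : T, x * x = x)
    (h1S : (1 : S) ≠ 0)
    (h f : S → T)
    (hm : ∀ s t : S, h (s * t) = h s * h t) (h0 : h 0 = 0) (h1 : h 1 ≠ 0)
    (fm : ∀ s t : S, f (s * t) = f s * f t) (f0 : f 0 = 0)
    (φ ψ : I₁ → I₂)
    (u uv w wv : I₁ → T)
    (hu : ∀ a : I₁, u a * h 1 = u a ∧ h 1 * u a = u a ∧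
      uv a * h 1 = uv a ∧ h 1 * uv a = uv a ∧ u a * uv a = h 1 ∧ uv a * u a = h 1)
    (hw : ∀ a : I₁, w a * f 1 = w a ∧ f 1 * w a = w a ∧
      wv a * f 1 = wv a ∧ f 1 * wv a = wv a ∧ w a * wv a = f 1 ∧ wv a * w a = f 1)
    (heq : brandtHomMap (I₁ := I₁) (S := S) φ u uv h = brandtHomMap ψ w wv f) :
    h = f ∧ u = w ∧ φ = ψ := by
  have idem (x : T) : IsIdempotentElem x := hidemT x
  have hu1 a : u a = h 1 := (idem _).eq_of_mul_eq_self_of_mul_eq (hu a).1 (hu a).2.2.2.2.1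
  have huv1 a : uv a = h 1 := (idem _).eq_of_mul_eq_self_of_mul_eq (hu a).2.2.1 (hu a).2.2.2.2.2
  have hw1 a : w a = f 1 := (idem _).eq_of_mul_eq_self_of_mul_eq (hw a).1 (hw a).2.2.2.2.1
  have hwv1 a : wv a = f 1 := (idem _).eq_of_mul_eq_self_of_mul_eq (hw a).2.2.1 (hw a).2.2.2.2.2
  rw [brandtHomMap_eq_brandtHomMap_one_one φ hm hu1 huv1,
    brandtHomMap_eq_brandtHomMap_one_one ψ fm hw1 hwv1] at heq
  obtain ⟨a₀⟩ := ‹Nonempty I₁›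
  have hf : h = f := funext fun s => by
    by_cases hs : s = 0
    · rw [hs, h0, f0]
    · exact apply_eq_of_brandtHomMap_one_one_eq heq a₀ ⟨s, hs⟩
  have hφψ : φ = ψ := funext (index_eq_of_brandtHomMap_one_one_eq heq ⟨1, h1S⟩ h1)
  exact ⟨hf, funext fun a => by rw [hu1, hw1, hf], hφψ⟩

/-- For semilattices `S`, `T` with identity and zero, the induced
homomorphism `B(h,u,φ) : B⁰_{λ₁}(S) → B⁰_{λ₂}(T)` determines the triple:
if `B(h,u,φ) = B(f,w,ψ)` then `h = f`, `u = w` and `φ = ψ`. -/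
theorem brandt_hom_determines_triple {I₁ I₂ S T : Type*}
    [CommMonoidWithZero S] [CommMonoidWithZero T] [Nonempty I₁]
    (hidemS : ∀ x : S, x * x = x) (hidemT : ∀ x : T, x * x = x)
    (h1S : (1 : S) ≠ 0)
    (h f : S → T)
    (hm : ∀ s t : S, h (s * t) = h s * h t) (h0 : h 0 = 0) (h1 : h 1 ≠ 0)
    (fm : ∀ s t : S, f (s * t) = f s * f t) (f0 : f 0 = 0) (f1 : f 1 ≠ 0)
    (φ ψ : I₁ → I₂) (hφ : Function.Injective φ) (hψ : Function.Injective ψ)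
    (u uv w wv : I₁ → T)
    (hu : ∀ a : I₁, u a * h 1 = u a ∧ h 1 * u a = u a ∧
      uv a * h 1 = uv a ∧ h 1 * uv a = uv a ∧ u a * uv a = h 1 ∧ uv a * u a = h 1)
    (hw : ∀ a : I₁, w a * f 1 = w a ∧ f 1 * w a = w a ∧
      wv a * f 1 = wv a ∧ f 1 * wv a = wv a ∧ w a * wv a = f 1 ∧ wv a * w a = f 1)
    (heq : brandtHomMap (I₁ := I₁) (S := S) φ u uv h = brandtHomMap ψ w wv f) :
    h = f ∧ u = w ∧ φ = ψ :=
  brandt_hom_determines_triple_general hidemT h1S h f hm h0 h1 fm f0 φ ψ u uv w wv hu hw heq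
end
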